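/- Let d ≥ 1 and let μ be a finite positive Borel measure on ℝ^d. Define T f(x) = ∫_{ℝ^d} f(x − y) dμ(y) for f ∈ 𝒮(ℝ^d). Then for all f, h ∈ 𝒮(ℝ^d) and all (x, ξ) ∈ ℝ^{2d}: W(Tf, Th)(x, ξ) = ∬_{ℝ^d × ℝ^d} e^{−2πi (y − y')·ξ} · W(f, h)(x − (y + y')/2, ξ) dμ(y) dμ(y'). (For d ≤ 3 and μ = μ_t the wave measure with total mass t supported in the ball of radius t, Tf = σ(t,D)f is the sine propagator of the wave equation.) -/

import Mathlib

open MeasureTheory Complex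
open scoped Real

noncomputable section

variable {d : ℕ}

/-- Cross-Wigner distribution
`W(f,h)(x,ξ) = ∫ f(x+u/2) conj(h(x−u/2)) e^{−2πi u·ξ} du`. -/
def crossWigner (f h : EuclideanSpace ℝ (Fin d) → ℂ)
    (x ξ : EuclideanSpace ℝ (Fin d)) : ℂ :=
  ∫ u, f (x + (1 / 2 : ℝ) • u) * (starRingEnd ℂ) (h (x - (1 / 2 : ℝ) • u)) *
    Complex.exp (-(2 * π * (inner ℝ u ξ : ℝ)) * Complex.I)

/-!
Expanding both convolutions inside the Wigner integral gives an integral over `u` and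
`(y, y')`. As `f` is bounded, `h` is integrable and `μ` is finite, Fubini allows the
`u`-integral to be done first; for fixed `(y, y')` it is the cross-Wigner distribution of the
translates `f (· - y)` and `h (· - y')`, and the substitution `u ↦ u + (y - y')` turns it into
`e^{−2πi (y − y')·ξ} W(f,h)(x − (y + y')/2, ξ)`.
-/

section HaarTranslation

variable {E F : Type*} [NormedAddCommGroup E] [NormedSpace ℝ E] [FiniteDimensional ℝ E]
  [MeasurableSpace E] [BorelSpace E] {ν : Measure E} [ν.IsAddHaarMeasure] [NormedAddCommGroup F]

theorem integral_comp_sub_smul [NormedSpace ℝ F] (g : E → F) (c : E) (a : ℝ) :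
    ∫ u, g (c - a • u) ∂ν = |(a ^ Module.finrank ℝ E)⁻¹| • ∫ v, g v ∂ν := by
  rw [Measure.integral_comp_smul ν (fun v => g (c - v)), integral_sub_left_eq_self]

theorem integrable_prod_comp_sub_smul {α : Type*} [MeasurableSpace α] {P : Measure α}
    [IsFiniteMeasure P] {g : E → F} (hg : Integrable g ν) (hgm : StronglyMeasurable g)
    {φ : α → E} (hφ : Measurable φ) {a : ℝ} (ha : a ≠ 0) :
    Integrable (fun q : E × α => g (φ q.2 - a • q.1)) (ν.prod P) := by
  have hm : AEStronglyMeasurable (fun q : E × α => g (φ q.2 - a • q.1)) (ν.prod P) :=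
    (hgm.comp_measurable ((hφ.comp measurable_snd).sub
      (measurable_fst.const_smul a))).aestronglyMeasurable
  refine (integrable_prod_iff' hm).2
    ⟨ae_of_all _ fun p => (hg.comp_sub_left (φ p)).comp_smul ha, ?_⟩
  simp only [integral_comp_sub_smul (fun v => ‖g v‖)]
  exact integrable_const _

end HaarTranslation

abbrev fourierPhase (u ξ : EuclideanSpace ℝ (Fin d)) : ℂ :=
  Complex.exp (-(2 * π * (inner ℝ u ξ : ℝ)) * Complex.I)

theorem norm_fourierPhase (u ξ : EuclideanSpace ℝ (Fin d)) : ‖fourierPhase u ξ‖ = 1 := by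
  rw [fourierPhase, Complex.norm_exp]
  simp

theorem fourierPhase_add_left (u v ξ : EuclideanSpace ℝ (Fin d)) :
    fourierPhase (u + v) ξ = fourierPhase v ξ * fourierPhase u ξ := by
  rw [fourierPhase, fourierPhase, fourierPhase, ← Complex.exp_add, inner_add_left]
  congr 1
  push_cast
  ring

def crossWignerIntegrand (f h : EuclideanSpace ℝ (Fin d) → ℂ)
    (x ξ u : EuclideanSpace ℝ (Fin d)) : ℂ :=
  f (x + (1 / 2 : ℝ) • u) * (starRingEnd ℂ) (h (x - (1 / 2 : ℝ) • u)) * fourierPhase u ξ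

theorem crossWigner_eq_integral (f h : EuclideanSpace ℝ (Fin d) → ℂ)
    (x ξ : EuclideanSpace ℝ (Fin d)) :
    crossWigner f h x ξ = ∫ u, crossWignerIntegrand f h x ξ u :=
  rfl

theorem crossWigner_comp_sub (f h : EuclideanSpace ℝ (Fin d) → ℂ)
    (y y' x ξ : EuclideanSpace ℝ (Fin d)) :
    crossWigner (fun s => f (s - y)) (fun s => h (s - y')) x ξ =
      fourierPhase (y - y') ξ * crossWigner f h (x - (1 / 2 : ℝ) • (y + y')) ξ := by
  rw [crossWigner_eq_integral, ← integral_add_right_eq_self _ (y - y'), crossWigner_eq_integral,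
    ← integral_const_mul]
  congr 1 with u
  have hf : x + (1 / 2 : ℝ) • (u + (y - y')) - y =
      x - (1 / 2 : ℝ) • (y + y') + (1 / 2 : ℝ) • u := by
    module
  have hh : x - (1 / 2 : ℝ) • (u + (y - y')) - y' =
      x - (1 / 2 : ℝ) • (y + y') - (1 / 2 : ℝ) • u := by
    module
  rw [crossWignerIntegrand, crossWignerIntegrand, hf, hh, fourierPhase_add_left]
  ring

theorem integrable_crossWignerIntegrand_comp_sub (μ ν : Measure (EuclideanSpace ℝ (Fin d)))
    [IsFiniteMeasure μ] [IsFiniteMeasure ν] (f h : SchwartzMap (EuclideanSpace ℝ (Fin d)) ℂ)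
    (x ξ : EuclideanSpace ℝ (Fin d)) :
    Integrable (fun q : EuclideanSpace ℝ (Fin d) ×
        (EuclideanSpace ℝ (Fin d) × EuclideanSpace ℝ (Fin d)) =>
      crossWignerIntegrand (fun s => f (s - q.2.1)) (fun s => h (s - q.2.2)) x ξ q.1)
      (volume.prod (μ.prod ν)) := by
  have hconj : Integrable (fun s => (starRingEnd ℂ) (h s)) :=
    Complex.conjCLE.toContinuousLinearMap.integrable_comp h.integrable
  have hconj_prod : Integrable (fun q : EuclideanSpace ℝ (Fin d) ×
        (EuclideanSpace ℝ (Fin d) × EuclideanSpace ℝ (Fin d)) =>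
      (starRingEnd ℂ) (h (x - (1 / 2 : ℝ) • q.1 - q.2.2))) (volume.prod (μ.prod ν)) := by
    refine (integrable_prod_comp_sub_smul (P := μ.prod ν) hconj
      h.continuous.star.stronglyMeasurable (φ := fun p => x - p.2) (by fun_prop)
      one_half_pos.ne').congr (ae_of_all _ fun q => ?_)
    simp only [sub_right_comm]
  refine (hconj_prod.bdd_mul (c := SchwartzMap.seminorm ℝ 0 0 f) ?_ ?_).mul_bdd (c := 1) ?_ ?_
  · exact (f.continuous.comp (by fun_prop)).aestronglyMeasurable
  · exact ae_of_all _ fun q => SchwartzMap.norm_le_seminorm ℝ f _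
  · exact (by fun_prop : Continuous _).aestronglyMeasurable
  · exact ae_of_all _ fun q => (norm_fourierPhase _ _).le

theorem crossWigner_integral_comp_sub (μ ν : Measure (EuclideanSpace ℝ (Fin d)))
    [IsFiniteMeasure μ] [IsFiniteMeasure ν] (f h : SchwartzMap (EuclideanSpace ℝ (Fin d)) ℂ)
    (x ξ : EuclideanSpace ℝ (Fin d)) :
    crossWigner (fun s => ∫ y, f (s - y) ∂μ) (fun s => ∫ y', h (s - y') ∂ν) x ξ =
      ∫ y, ∫ y', crossWigner (fun s => f (s - y)) (fun s => h (s - y')) x ξ ∂ν ∂μ := by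
  have hint := integrable_crossWignerIntegrand_comp_sub μ ν f h x ξ
  calc _ = ∫ u, ∫ p, crossWignerIntegrand (fun s => f (s - p.1)) (fun s => h (s - p.2)) x ξ u
          ∂(μ.prod ν) := by
        rw [crossWigner_eq_integral]
        congr 1 with u
        rw [crossWignerIntegrand, ← integral_conj, ← integral_prod_mul, ← integral_mul_const]
        rfl
    _ = ∫ p, crossWigner (fun s => f (s - p.1)) (fun s => h (s - p.2)) x ξ ∂(μ.prod ν) :=
        integral_integral_swap hint
    _ = _ := integral_prod _ hint.integral_prod_right

theorem crossWigner_measure_convolution_general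
    (μ : Measure (EuclideanSpace ℝ (Fin d))) [IsFiniteMeasure μ]
    (f h : SchwartzMap (EuclideanSpace ℝ (Fin d)) ℂ)
    (x ξ : EuclideanSpace ℝ (Fin d)) :
    crossWigner (fun s => ∫ y, f (s - y) ∂μ) (fun s => ∫ y, h (s - y) ∂μ) x ξ
      = ∫ y, ∫ y', Complex.exp (-(2 * π * (inner ℝ (y - y') ξ : ℝ)) * Complex.I) *
          crossWigner (⇑f) (⇑h) (x - (1 / 2 : ℝ) • (y + y')) ξ ∂μ ∂μ := by
  simp only [crossWigner_integral_comp_sub μ μ f h x ξ, crossWigner_comp_sub]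

/-- **Wigner intertwining for convolution with a finite positive measure.** If
`Tf(x) = ∫ f(x − y) dμ(y)`, then for all `f, h ∈ 𝒮(ℝ^d)` and `(x,ξ) ∈ ℝ^{2d}`:
`W(Tf,Th)(x,ξ) = ∬ e^{−2πi(y−y')·ξ} W(f,h)(x − (y+y')/2, ξ) dμ(y) dμ(y')`.
For `d ≤ 3` and `μ = μ_t` the wave measure, `T` is the sine propagator of the wave
equation. -/
theorem crossWigner_measure_convolution
    (hd : 1 ≤ d) (μ : Measure (EuclideanSpace ℝ (Fin d))) [IsFiniteMeasure μ]
    (f h : SchwartzMap (EuclideanSpace ℝ (Fin d)) ℂ)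
    (x ξ : EuclideanSpace ℝ (Fin d)) :
    crossWigner (fun s => ∫ y, f (s - y) ∂μ) (fun s => ∫ y, h (s - y) ∂μ) x ξ
      = ∫ y, ∫ y', Complex.exp (-(2 * π * (inner ℝ (y - y') ξ : ℝ)) * Complex.I) *
          crossWigner (⇑f) (⇑h) (x - (1 / 2 : ℝ) • (y + y')) ξ ∂μ ∂μ :=
  crossWigner_measure_convolution_general μ f h x ξ
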